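/- For every tree T with at least 2 vertices, β(T) ≤ (2/3)(|T| + L(T) − S(T)), where L(T) is the number of leaves and S(T) is the number of support vertices. -/

import Mathlib

/-!
An independent set `s` is incident to pairwise distinct edges and every non-leaf of a tree on
`n ≥ 2` vertices has degree at least 2, so `2|s| - |s ∩ L| ≤ n - 1`. Each leaf has a single
neighbour, so `S ≤ L`. When `n ≥ 3` no support vertex is a leaf: the support vertices in `s`
are covered by the neighbours of the leaves outside `s`, and those outside `s` avoid these leaves,
so `S ≤ n - |s|`. Adding up gives the bound; for `n = 2` the first inequality forces `|s| ≤ 1`.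
-/

open SimpleGraph Finset

namespace SimpleGraph

variable {V : Type*} [Fintype V] {G : SimpleGraph V} [DecidableRel G.Adj]

variable (G) in
def leafFinset : Finset V := {v | G.degree v = 1}

variable (G) in
def supportVertexFinset : Finset V := {v | ∃ u, G.Adj v u ∧ G.degree u = 1}

lemma mem_leafFinset {v : V} : v ∈ G.leafFinset ↔ G.degree v = 1 := by
  simp [leafFinset]

lemma mem_supportVertexFinset {v : V} :
    v ∈ G.supportVertexFinset ↔ ∃ u, G.Adj v u ∧ G.degree u = 1 := by
  simp [supportVertexFinset]

lemma card_le_card_of_forall_exists_adj_leaf [DecidableEq V] {A B : Finset V}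
    (hA : A ⊆ G.leafFinset) (hB : ∀ v ∈ B, ∃ u ∈ A, G.Adj v u) : #B ≤ #A := by
  have hBA : B ⊆ A.biUnion (G.neighborFinset ·) := fun v hv => by
    obtain ⟨u, hu, huv⟩ := hB v hv
    exact mem_biUnion.mpr ⟨u, hu, (mem_neighborFinset _ _ _).mpr huv.symm⟩
  calc #B ≤ #(A.biUnion (G.neighborFinset ·)) := card_le_card hBA
    _ ≤ ∑ u ∈ A, G.degree u := card_biUnion_le
    _ = #A := by
      rw [card_eq_sum_ones]
      exact sum_congr rfl fun u hu => mem_leafFinset.mp (hA hu)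

lemma card_supportVertexFinset_le_card_leafFinset :
    #G.supportVertexFinset ≤ #G.leafFinset := by
  classical
  exact card_le_card_of_forall_exists_adj_leaf Subset.rfl fun v hv => by
    obtain ⟨u, huv, hu⟩ := mem_supportVertexFinset.mp hv
    exact ⟨u, mem_leafFinset.mpr hu, huv⟩

lemma IsIndepSet.sum_degree_le_card_edgeFinset [DecidableEq V] {s : Finset V}
    (hs : G.IsIndepSet s) :
    ∑ v ∈ s, G.degree v ≤ #G.edgeFinset := by
  have hdisj : (s : Set V).PairwiseDisjoint (G.incidenceFinset ·) := fun u hu w hw huw => by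
    rw [Function.onFun, ← disjoint_coe, coe_incidenceFinset, coe_incidenceFinset,
      Set.disjoint_iff_inter_eq_empty]
    exact G.incidenceSet_inter_incidenceSet_of_not_adj (hs hu hw huw) huw
  calc ∑ v ∈ s, G.degree v = #(s.biUnion (G.incidenceFinset ·)) := by
        simp_rw [card_biUnion hdisj, card_incidenceFinset_eq_degree]
    _ ≤ #G.edgeFinset := card_le_card (biUnion_subset.mpr fun v _ => G.incidenceFinset_subset v)

namespace Preconnected

lemma two_mul_card_le_sum_degree_add [Nontrivial V] (hG : G.Preconnected) (s : Finset V) :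
    2 * #s ≤ ∑ v ∈ s, G.degree v + #{v ∈ s | G.degree v = 1} := by
  rw [card_filter, ← sum_add_distrib, card_eq_sum_ones, mul_sum]
  refine sum_le_sum fun v _ => ?_
  have := hG.degree_pos_of_nontrivial v
  split_ifs <;> omega

lemma eq_or_eq_of_adj_of_degree_eq_one (hG : G.Preconnected) {u v : V} (huv : G.Adj u v)
    (hu : G.degree u = 1) (hv : G.degree v = 1) (x : V) : x = u ∨ x = v := by
  suffices ∀ a b, G.Walk a b → (a = u ∨ a = v) → (b = u ∨ b = v) from
    this u x (hG u x).some (.inl rfl)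
  intro a b p
  induction p with
  | nil => exact id
  | cons hab _ ih =>
    rintro (rfl | rfl)
    · exact ih (.inr ((degree_eq_one_iff_existsUnique_adj.mp hu).unique hab huv))
    · exact ih (.inl ((degree_eq_one_iff_existsUnique_adj.mp hv).unique hab huv.symm))

lemma degree_ne_one_of_adj_of_degree_eq_one (hG : G.Preconnected) (h3 : 3 ≤ Fintype.card V)
    {u v : V} (huv : G.Adj u v) (hu : G.degree u = 1) : G.degree v ≠ 1 := fun hv => by
  classical
  have hcover : (univ : Finset V) ⊆ {u, v} := fun x _ => by
    simpa using hG.eq_or_eq_of_adj_of_degree_eq_one huv hu hv x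
  have hcard := (card_le_card hcover).trans (card_insert_le u {v})
  rw [card_univ, card_singleton] at hcard
  omega

lemma disjoint_leafFinset_supportVertexFinset (hG : G.Preconnected) (h3 : 3 ≤ Fintype.card V) :
    Disjoint G.leafFinset G.supportVertexFinset := by
  rw [Finset.disjoint_left]
  intro v hv hS
  obtain ⟨u, hvu, hu⟩ := mem_supportVertexFinset.mp hS
  exact hG.degree_ne_one_of_adj_of_degree_eq_one h3 hvu.symm hu (mem_leafFinset.mp hv)

lemma card_supportVertexFinset_le_card_compl [DecidableEq V] (hG : G.Preconnected)
    (h3 : 3 ≤ Fintype.card V) {s : Finset V} (hs : G.IsIndepSet s) :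
    #G.supportVertexFinset ≤ #sᶜ := by
  have hin : #(G.supportVertexFinset ∩ s) ≤ #(G.leafFinset \ s) :=
    card_le_card_of_forall_exists_adj_leaf sdiff_subset fun v hv => by
      obtain ⟨hvS, hvs⟩ := mem_inter.mp hv
      obtain ⟨u, hvu, hu⟩ := mem_supportVertexFinset.mp hvS
      have hus : u ∉ s := fun hus => hs hvs hus hvu.ne hvu
      exact ⟨u, mem_sdiff.mpr ⟨mem_leafFinset.mpr hu, hus⟩, hvu⟩
  have hdisj : Disjoint (G.leafFinset \ s) (G.supportVertexFinset \ s) :=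
    (hG.disjoint_leafFinset_supportVertexFinset h3).mono sdiff_subset sdiff_subset
  have hout : #(G.leafFinset \ s) + #(G.supportVertexFinset \ s) ≤ #sᶜ := by
    rw [← card_union_of_disjoint hdisj, ← union_sdiff_distrib, compl_eq_univ_sdiff]
    exact card_le_card (sdiff_subset_sdiff (subset_univ _) Subset.rfl)
  have hsplit := card_inter_add_card_sdiff G.supportVertexFinset s
  omega

end Preconnected

end SimpleGraph

/-- For every tree `T` with at least 2 vertices,
`β(T) ≤ (2/3) (|T| + L(T) - S(T))`. -/
theorem stmt4 {V : Type*} [Fintype V] [DecidableEq V] (G : SimpleGraph V)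
    [DecidableRel G.Adj] (hT : G.IsTree) (hn : 2 ≤ Fintype.card V)
    (s : Finset V) (hs : ∀ u ∈ s, ∀ w ∈ s, ¬ G.Adj u w) :
    (3 : ℤ) * s.card ≤ 2 * ((Fintype.card V : ℤ)
        + (univ.filter (fun v => G.degree v = 1)).card
        - (univ.filter (fun v => ∃ u, G.Adj v u ∧ G.degree u = 1)).card) := by
  have : Nontrivial V := Fintype.one_lt_card_iff_nontrivial.mp hn
  have hG := hT.connected.preconnected
  have hsi : G.IsIndepSet s := fun u hu w hw _ => hs u hu w hw
  have hdeg := hG.two_mul_card_le_sum_degree_add s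
  have hsum := hsi.sum_degree_le_card_edgeFinset
  have hedge := hT.card_edgeFinset
  have hsL : #{v ∈ s | G.degree v = 1} ≤ #G.leafFinset :=
    card_le_card (filter_subset_filter _ (subset_univ s))
  have hss : #{v ∈ s | G.degree v = 1} ≤ #s := card_filter_le s _
  have hSL := G.card_supportVertexFinset_le_card_leafFinset
  change (3 : ℤ) * #s ≤ 2 * ((Fintype.card V : ℤ) + #G.leafFinset - #G.supportVertexFinset)
  rcases hn.eq_or_lt with hn2 | h3
  · omega
  · have hSc := card_compl s ▸ hG.card_supportVertexFinset_le_card_compl h3 hsi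
    omega
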